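/- Let p, q be positive reals with q < p, n ≥ 2, and A the n×n matrix with q on the diagonal, -p on the subdiagonal, p in position (1,n), and 0 elsewhere. For every standard basis vector e_i of ℝ^n, the vectors p·e_i and q·e_i do not lie in the lattice A·ℤ^n. -/
import Mathlib


/-- The matrix `A` with `q` on the diagonal, `-p` on the subdiagonal,
`p` in the top-right corner (entry `(1,n)`), and `0` elsewhere. -/
def tilingMatrix (p q : ℝ) (n : ℕ) : Matrix (Fin n) (Fin n) ℝ :=
  Matrix.of fun i j =>
    if (i : ℕ) = (j : ℕ) then q
    else if (i : ℕ) = (j : ℕ) + 1 then -p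
    else if (i : ℕ) = 0 ∧ (j : ℕ) = n - 1 then p
    else 0

/-- The lattice `A·ℤⁿ` of integer linear combinations of the columns of `A`. -/
def latticeA (p q : ℝ) (n : ℕ) : Set (Fin n → ℝ) :=
  {x | ∃ z : Fin n → ℤ, x = (tilingMatrix p q n).mulVec fun i => (z i : ℝ)}

lemma colsum (p q : ℝ) (n : ℕ) (hn : 2 ≤ n) (j : Fin n) :
    ∑ r : Fin n, p ^ (n - 1 - (r : ℕ)) * q ^ (r : ℕ) * tilingMatrix p q n r j
      = if (j : ℕ) = n - 1 then p ^ n + q ^ n else 0 := by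
  classical
  by_cases hj : (j : ℕ) = n - 1
  · have h0n : 0 < n := by omega
    set a : Fin n := ⟨0, h0n⟩ with ha
    have hab : a ≠ j := by
      intro h; apply_fun (Fin.val) at h; simp [ha] at h; omega
    rw [← Finset.sum_subset (Finset.subset_univ ({a, j} : Finset (Fin n)))]
    · rw [Finset.sum_pair hab]
      have hva : (a : ℕ) = 0 := rfl
      have hAa : tilingMatrix p q n a j = p := by
        show (if ((a:ℕ) = (j:ℕ)) then q else if (a:ℕ) = (j:ℕ)+1 then -p
          else if ((a:ℕ) = 0 ∧ (j:ℕ) = n-1) then p else 0) = p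
        rw [if_neg (by omega), if_neg (by omega), if_pos ⟨hva, hj⟩]
      have hAj : tilingMatrix p q n j j = q := by
        show (if ((j:ℕ) = (j:ℕ)) then q else if (j:ℕ) = (j:ℕ)+1 then -p
          else if ((j:ℕ) = 0 ∧ (j:ℕ) = n-1) then p else 0) = q
        rw [if_pos rfl]
      rw [hAa, hAj, hj, if_pos rfl]
      have e1 : n - 1 - 0 = n - 1 := by omega
      have e2 : n - 1 - (n - 1) = 0 := by omega
      rw [ha, e2]
      simp only [e1, pow_zero, one_mul, mul_one]
      have : p ^ (n - 1) * p = p ^ n := by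
        rw [← pow_succ]; congr 1; omega
      have hq' : q ^ (n - 1) * q = q ^ n := by
        rw [← pow_succ]; congr 1; omega
      rw [this, hq']
    · intro r _ hr
      simp only [Finset.mem_insert, Finset.mem_singleton, not_or] at hr
      have h1 : (r : ℕ) ≠ (j : ℕ) := fun h => hr.2 (Fin.ext h)
      have h2 : (r : ℕ) ≠ (j : ℕ) + 1 := by have := r.isLt; omega
      have h3 : (r : ℕ) ≠ 0 := by
        intro h; exact hr.1 (Fin.ext (by simp [ha, h]))
      simp only [tilingMatrix, Matrix.of_apply]
      rw [if_neg h1, if_neg h2, if_neg (by tauto)]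
      ring
  · have hjlt : (j : ℕ) < n - 1 := by have := j.isLt; omega
    set b : Fin n := ⟨(j : ℕ) + 1, by omega⟩ with hb
    have hab : j ≠ b := by
      intro h; apply_fun (Fin.val) at h; simp [hb] at h
    rw [← Finset.sum_subset (Finset.subset_univ ({j, b} : Finset (Fin n)))]
    · rw [Finset.sum_pair hab]
      have hvb : (b : ℕ) = (j : ℕ) + 1 := rfl
      have hAj : tilingMatrix p q n j j = q := by
        show (if ((j:ℕ) = (j:ℕ)) then q else if (j:ℕ) = (j:ℕ)+1 then -p
          else if ((j:ℕ) = 0 ∧ (j:ℕ) = n-1) then p else 0) = q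
        rw [if_pos rfl]
      have hAb : tilingMatrix p q n b j = -p := by
        show (if ((b:ℕ) = (j:ℕ)) then q else if (b:ℕ) = (j:ℕ)+1 then -p
          else if ((b:ℕ) = 0 ∧ (j:ℕ) = n-1) then p else 0) = -p
        rw [if_neg (by omega), if_pos hvb]
      rw [hAj, hAb, if_neg hj, hb]
      have e1 : n - 1 - ((j : ℕ) + 1) + 1 = n - 1 - (j : ℕ) := by omega
      have : p ^ (n - 1 - ((j : ℕ) + 1)) * p = p ^ (n - 1 - (j : ℕ)) := by
        rw [← pow_succ, e1]
      calc p ^ (n - 1 - (j : ℕ)) * q ^ (j : ℕ) * q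
            + p ^ (n - 1 - ((j : ℕ) + 1)) * q ^ ((j : ℕ) + 1) * (-p)
          = p ^ (n - 1 - (j : ℕ)) * q ^ ((j : ℕ) + 1)
            - (p ^ (n - 1 - ((j : ℕ) + 1)) * p) * q ^ ((j : ℕ) + 1) := by
            rw [pow_succ]; ring
        _ = 0 := by rw [this]; ring
    · intro r _ hr
      simp only [Finset.mem_insert, Finset.mem_singleton, not_or] at hr
      have h1 : (r : ℕ) ≠ (j : ℕ) := fun h => hr.1 (Fin.ext h)
      have h2 : (r : ℕ) ≠ (j : ℕ) + 1 := by
        intro h; exact hr.2 (Fin.ext (by simp [hb, h]))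
      simp only [tilingMatrix, Matrix.of_apply]
      rw [if_neg h1, if_neg h2, if_neg (by tauto)]
      ring

lemma keysum (p q : ℝ) (n : ℕ) (hn : 2 ≤ n) (z : Fin n → ℝ) :
    ∑ r : Fin n, p ^ (n - 1 - (r : ℕ)) * q ^ (r : ℕ) * (tilingMatrix p q n).mulVec z r
      = (p ^ n + q ^ n) * z ⟨n - 1, by omega⟩ := by
  classical
  have step1 : ∀ r : Fin n, p ^ (n - 1 - (r : ℕ)) * q ^ (r : ℕ) * (tilingMatrix p q n).mulVec z r
      = ∑ j, p ^ (n - 1 - (r : ℕ)) * q ^ (r : ℕ) * tilingMatrix p q n r j * z j := by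
    intro r
    simp [Matrix.mulVec, dotProduct, Finset.mul_sum, mul_assoc]
  rw [Finset.sum_congr rfl (fun r _ => step1 r), Finset.sum_comm]
  have step2 : ∀ j : Fin n, ∑ r : Fin n,
      p ^ (n - 1 - (r : ℕ)) * q ^ (r : ℕ) * tilingMatrix p q n r j * z j
      = (if j = (⟨n - 1, by omega⟩ : Fin n) then (p ^ n + q ^ n) * z j else 0) := by
    intro j
    rw [← Finset.sum_mul, colsum p q n hn j]
    by_cases h : (j : ℕ) = n - 1
    · rw [if_pos h, if_pos (Fin.ext h)]
    · rw [if_neg h, if_neg (fun hc => h (by rw [hc])), zero_mul]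
  rw [Finset.sum_congr rfl (fun j _ => step2 j), Fintype.sum_ite_eq']

lemma not_in_lattice (p q c : ℝ) (hp : 0 < p) (hq : 0 < q) (hqp : q < p)
    (hc : 0 < c) (hcp : c ≤ p) (n : ℕ) (hn : 2 ≤ n) (i : Fin n) :
    c • (Pi.single i 1 : Fin n → ℝ) ∉ latticeA p q n := by
  rintro ⟨z, hz⟩
  have key := keysum p q n hn (fun r => (z r : ℝ))
  rw [← hz] at key
  have hL : ∑ r : Fin n, p ^ (n - 1 - (r : ℕ)) * q ^ (r : ℕ)
      * (c • (Pi.single i 1 : Fin n → ℝ)) r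
      = p ^ (n - 1 - (i : ℕ)) * q ^ (i : ℕ) * c := by
    simp [Pi.single_apply, mul_ite, Fintype.sum_ite_eq']
  rw [hL] at key
  set b : Fin n := ⟨n - 1, by omega⟩ with hb
  have hi : (i : ℕ) ≤ n - 1 := by have := i.isLt; omega
  have hqi : q ^ (i : ℕ) ≤ p ^ (i : ℕ) := pow_le_pow_left₀ hq.le hqp.le _
  have hppos : (0 : ℝ) < p ^ (n - 1 - (i : ℕ)) := pow_pos hp _
  have hLpos : 0 < p ^ (n - 1 - (i : ℕ)) * q ^ (i : ℕ) * c := by positivity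
  have hLlt : p ^ (n - 1 - (i : ℕ)) * q ^ (i : ℕ) * c < p ^ n + q ^ n := by
    have h1 : p ^ (n - 1 - (i : ℕ)) * q ^ (i : ℕ) * c
        ≤ p ^ (n - 1 - (i : ℕ)) * p ^ (i : ℕ) * p := by
      have h0 : q ^ (i : ℕ) * c ≤ p ^ (i : ℕ) * p :=
        mul_le_mul hqi hcp hc.le (pow_pos hp _).le
      calc p ^ (n - 1 - (i : ℕ)) * q ^ (i : ℕ) * c
          = p ^ (n - 1 - (i : ℕ)) * (q ^ (i : ℕ) * c) := by ring
        _ ≤ p ^ (n - 1 - (i : ℕ)) * (p ^ (i : ℕ) * p) :=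
            mul_le_mul_of_nonneg_left h0 hppos.le
        _ = p ^ (n - 1 - (i : ℕ)) * p ^ (i : ℕ) * p := by ring
    have h2 : p ^ (n - 1 - (i : ℕ)) * p ^ (i : ℕ) * p = p ^ n := by
      rw [← pow_add, ← pow_succ]
      congr 1; omega
    have h3 : (0 : ℝ) < q ^ n := pow_pos hq n
    linarith
  -- key : p ^ .. * q ^ .. * c = (p^n + q^n) * z b
  have hS : (0 : ℝ) < p ^ n + q ^ n := by positivity
  have hzb : (0 : ℝ) < (z b : ℝ) := by nlinarith
  have hzb1 : (1 : ℝ) ≤ (z b : ℝ) := by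
    have : (0 : ℤ) < z b := by exact_mod_cast hzb
    exact_mod_cast this
  nlinarith

theorem unit_multiples_not_in_lattice (p q : ℝ) (hp : 0 < p) (hq : 0 < q) (hqp : q < p)
    (n : ℕ) (hn : 2 ≤ n) (i : Fin n) :
    p • (Pi.single i 1 : Fin n → ℝ) ∉ latticeA p q n ∧
      q • (Pi.single i 1 : Fin n → ℝ) ∉ latticeA p q n := by
  exact ⟨not_in_lattice p q p hp hq hqp hp le_rfl n hn i,
    not_in_lattice p q q hp hq hqp hq hqp.le n hn i⟩
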